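/- arXiv:2310.12889 — 2 statements merged into one kernel-verified Lean document; each statement's English description precedes it below -/
import Mathlib

section
/- If a collection ⟨P_1,…,P_r⟩ consists of pairwise edge-disjoint paths in a directed graph, then the weight monomial ξ(⟨P_1,…,P_r⟩) = ∏_i ∏ x_{e_j e_{j+1}} uniquely determines the collection: no other collection of walks from S to T has the same weight monomial. -/
/-- The weight `ξ(W)` of a walk `W = ⟨e_1, …, e_{n+1}⟩`, a monomial in commuting
variables indexed by consecutive pairs of edges: `ξ(W) = ∏_j x_{e_j e_{j+1}}`. -/
noncomputable def walkWeight {E : Type*} (K : Type*) [Field K]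
    (W : Σ n : ℕ, (Fin (n + 1) → E)) : MvPolynomial (E × E) K :=
  ∏ j : Fin W.1, MvPolynomial.X (W.2 j.castSucc, W.2 j.succ)

open MvPolynomial in
lemma prodX {σ K : Type*} [Field K] {ι : Type*} (s : Finset ι) (f : ι → σ) :
    (∏ i ∈ s, (MvPolynomial.X (f i) : MvPolynomial σ K)) =
      MvPolynomial.monomial (∑ i ∈ s, Finsupp.single (f i) 1) 1 := by
  induction s using Finset.cons_induction with
  | empty => simp
  | cons a s ha ih =>
    rw [Finset.prod_cons, Finset.sum_cons, ih, X, monomial_mul, one_mul]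

open MvPolynomial in
lemma prodMon {σ K : Type*} [Field K] {ι : Type*} (s : Finset ι) (g : ι → (σ →₀ ℕ)) :
    (∏ i ∈ s, (MvPolynomial.monomial (g i) (1:K))) =
      MvPolynomial.monomial (∑ i ∈ s, g i) 1 := by
  induction s using Finset.cons_induction with
  | empty => simp
  | cons a s ha ih =>
    rw [Finset.prod_cons, Finset.sum_cons, ih, monomial_mul, one_mul]

lemma sigmaExt {E : Type*} (a b : Σ n : ℕ, Fin (n+1) → E) (h1 : a.1 = b.1)
    (h2 : ∀ k (hk : k < a.1 + 1) (hk' : k < b.1 + 1), a.2 ⟨k, hk⟩ = b.2 ⟨k, hk'⟩) : a = b := by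
  obtain ⟨n, f⟩ := a
  obtain ⟨m, g⟩ := b
  dsimp at h1 h2
  subst h1
  simp only [Sigma.mk.inj_iff, heq_eq_eq, true_and]
  funext k
  exact h2 k.1 k.2 k.2

/-- **Edge-disjoint path collections are determined by their weight monomial.**
Suppose `P = ⟨P_1, …, P_r⟩` is a collection of pairwise edge-disjoint paths (each `P i`
satisfies the chain condition, no two of its edges enter the same vertex, and its
endpoints are distinct). If `C = ⟨W_1, …, W_r⟩` is any collection of walks from the same
starting edges (`W_i` begins at the starting edge of `P_i`) which end at pairwise
distinct ending edges of `P` (via a permutation `σ`), and whose weight monomial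
`ξ(C) = ∏_i ξ(W_i)` equals `ξ(P)`, then `C = P`. -/
theorem disjoint_paths_weight_unique {V E : Type*} [DecidableEq E]
    {K : Type*} [Field K] (tail head : E → V) {r : ℕ}
    (P C : Fin r → Σ n : ℕ, (Fin (n + 1) → E))
    (hPchain : ∀ i, ∀ j : Fin (P i).1, head ((P i).2 j.castSucc) = tail ((P i).2 j.succ))
    (hPpath : ∀ i, Function.Injective fun j : Fin ((P i).1 + 1) => head ((P i).2 j))
    (hPends : ∀ i, tail ((P i).2 0) ≠ head ((P i).2 (Fin.last (P i).1)))
    (hPdisj : ∀ i j, i ≠ j → ∀ (a : Fin ((P i).1 + 1)) (b : Fin ((P j).1 + 1)),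
      (P i).2 a ≠ (P j).2 b)
    (hCchain : ∀ i, ∀ j : Fin (C i).1, head ((C i).2 j.castSucc) = tail ((C i).2 j.succ))
    (hstart : ∀ i, (C i).2 0 = (P i).2 0)
    (hend : ∃ σ : Equiv.Perm (Fin r),
      ∀ i, (C i).2 (Fin.last (C i).1) = (P (σ i)).2 (Fin.last (P (σ i)).1))
    (hweight : ∏ i, walkWeight K (C i) = ∏ i, walkWeight K (P i)) :
    C = P := by
  classical
  -- edges within a path are pairwise distinct
  have hPinj : ∀ a, Function.Injective (P a).2 := by
    intro a x y hxy
    exact hPpath a (by simp only [hxy])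
  -- turn weight equality into a Finsupp equality
  have hw : (∑ i, ∑ j : Fin (C i).1,
        Finsupp.single (((C i).2 j.castSucc, (C i).2 j.succ)) (1:ℕ))
      = ∑ i, ∑ j : Fin (P i).1,
        Finsupp.single (((P i).2 j.castSucc, (P i).2 j.succ)) 1 := by
    have hC : ∀ W : Σ n : ℕ, (Fin (n+1) → E), walkWeight K W
        = MvPolynomial.monomial
          (∑ j : Fin W.1, Finsupp.single ((W.2 j.castSucc, W.2 j.succ)) 1) (1:K) := by
      intro W
      exact prodX Finset.univ _
    rw [funext fun i => hC (C i), funext fun i => hC (P i)] at hweight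
    rw [prodMon, prodMon] at hweight
    exact MvPolynomial.monomial_left_injective (one_ne_zero (α := K)) hweight
  -- every consecutive pair of C is a consecutive pair of P
  have key : ∀ i (j : Fin (C i).1), ∃ a, ∃ b : Fin (P a).1,
      (P a).2 b.castSucc = (C i).2 j.castSucc ∧ (P a).2 b.succ = (C i).2 j.succ := by
    intro i j
    set p : E × E := ((C i).2 j.castSucc, (C i).2 j.succ) with hp
    have happ := DFunLike.congr_fun hw p
    simp only [Finsupp.finset_sum_apply, Finsupp.single_apply] at happ
    have hne : (∑ a, ∑ b : Fin (P a).1,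
        if ((P a).2 b.castSucc, (P a).2 b.succ) = p then (1:ℕ) else 0) ≠ 0 := by
      rw [← happ]
      intro h0
      rw [Finset.sum_eq_zero_iff] at h0
      have h1 := h0 i (Finset.mem_univ i)
      rw [Finset.sum_eq_zero_iff] at h1
      have h2 := h1 j (Finset.mem_univ j)
      simp [hp] at h2
    obtain ⟨a, _, ha⟩ := Finset.exists_ne_zero_of_sum_ne_zero hne
    obtain ⟨b, _, hb⟩ := Finset.exists_ne_zero_of_sum_ne_zero ha
    refine ⟨a, b, ?_⟩
    by_cases h : ((P a).2 b.castSucc, (P a).2 b.succ) = p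
    · exact ⟨congrArg Prod.fst h, congrArg Prod.snd h⟩
    · simp [h] at hb
  obtain ⟨σ, hσ⟩ := hend
  have main : ∀ i, C i = P i := by
    intro i
    -- trace: the walk C i follows P i
    have trace : ∀ k, k ≤ (C i).1 → k ≤ (P i).1 ∧
        ∀ (h1 : k < (C i).1 + 1) (h2 : k < (P i).1 + 1),
          (C i).2 ⟨k, h1⟩ = (P i).2 ⟨k, h2⟩ := by
      intro k
      induction k with
      | zero =>
        intro _
        refine ⟨Nat.zero_le _, fun h1 h2 => ?_⟩
        have := hstart i
        simpa [Fin.ext_iff] using this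
      | succ k ih =>
        intro hk
        obtain ⟨hkP, heq⟩ := ih (Nat.le_of_succ_le hk)
        have hkC : k < (C i).1 := hk
        obtain ⟨a, b, hb1, hb2⟩ := key i ⟨k, hkC⟩
        have hcs : (⟨k, hkC⟩ : Fin (C i).1).castSucc = ⟨k, by omega⟩ := rfl
        rw [hcs, heq (by omega) (by omega)] at hb1
        have hai : a = i := by
          by_contra hne
          exact hPdisj a i hne b.castSucc ⟨k, by omega⟩ hb1
        subst hai
        have hbk : (b : ℕ) = k := by
          have := hPinj a hb1
          simpa [Fin.ext_iff] using this
        have hkP' : k + 1 ≤ (P a).1 := by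
          have := b.2; omega
        refine ⟨hkP', fun h1 h2 => ?_⟩
        have hss : (⟨k, hkC⟩ : Fin (C a).1).succ = ⟨k+1, h1⟩ := rfl
        rw [hss] at hb2
        rw [← hb2]
        exact congrArg (P a).snd (Fin.ext (by simp [hbk]))
    have hlen : (C i).1 = (P i).1 := by
      rcases lt_trichotomy ((C i).1) ((P i).1) with hlt | heqn | hgt
      · -- C i ends too early
        obtain ⟨_, heq⟩ := trace (C i).1 le_rfl
        have hlast := hσ i
        have hthis : (P i).2 ⟨(C i).1, by omega⟩ = (P (σ i)).2 (Fin.last (P (σ i)).1) := by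
          rw [← heq (by omega) (by omega), ← hlast]
          congr 1
        have hσi : σ i = i := by
          by_contra hne
          exact hPdisj i (σ i) (fun h => hne h.symm) ⟨(C i).1, by omega⟩ _ hthis
        rw [hσi] at hthis
        have := hPinj i hthis
        simp [Fin.ext_iff, Fin.last] at this
        omega
      · exact heqn
      · -- C i goes past the end of P i
        obtain ⟨_, heq⟩ := trace (P i).1 (by omega)
        have hkC : (P i).1 < (C i).1 := hgt
        obtain ⟨a, b, hb1, _⟩ := key i ⟨(P i).1, hkC⟩
        have hcs : (⟨(P i).1, hkC⟩ : Fin (C i).1).castSucc = ⟨(P i).1, by omega⟩ := rfl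
        rw [hcs, heq (by omega) (by omega)] at hb1
        have hai : a = i := by
          by_contra hne
          exact hPdisj a i hne b.castSucc ⟨(P i).1, by omega⟩ hb1
        subst hai
        have := hPinj a hb1
        have hbv := b.2
        simp [Fin.ext_iff] at this
        omega
    refine sigmaExt _ _ hlen ?_
    intro k hk hk'
    exact (trace k (by omega)).2 hk hk'
  funext i
  exact main i
end

section
/- Let G be a directed graph on vertex set V, and construct G_new by replacing each vertex v with three vertices v, v_in, v_out, replacing each edge (u,v) by (u_out, v_in), and adding k parallel edges from v to v_out and k parallel edges from v_in to v for each v ∈ V. Then for any original vertices s, t ∈ V, the maximum number of pairwise edge-disjoint st-paths in G_new equals min(k, λ(s,t)), where λ(s,t) is the maximum number of pairwise edge-disjoint st-paths in G. -/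
/-- `w` is a path from `s` to `t` in the directed (multi)graph described by the maps
`tail, head : E → V`: a nonempty sequence of edges satisfying the chain condition,
starting at `s` and ending at `t`, no two of whose edges enter the same vertex, with
`s ≠ t`. -/
def IsEdgePath {V E : Type*} (tail head : E → V) (s t : V) (w : List E) : Prop :=
  ∃ hw : w ≠ [], w.Chain' (fun a b => head a = tail b) ∧
    tail (w.head hw) = s ∧ head (w.getLast hw) = t ∧
    (w.map head).Nodup ∧ s ≠ t

/-- The connectivity `λ(s,t)`: the maximum number of pairwise edge-disjoint paths from
`s` to `t`. -/
noncomputable def connectivity {V E : Type*} (tail head : E → V) (s t : V) : ℕ :=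
  sSup {r : ℕ | ∃ W : Fin r → List E, (∀ i, IsEdgePath tail head s t (W i)) ∧
    ∀ i j, i ≠ j → ∀ x ∈ W i, x ∉ W j}

namespace DegRedAux

variable {V E : Type*}

def PathSet (tl hd : E → V) (s t : V) : Set ℕ :=
  {r : ℕ | ∃ W : Fin r → List E, (∀ i, IsEdgePath tl hd s t (W i)) ∧
    ∀ i j, i ≠ j → ∀ x ∈ W i, x ∉ W j}

lemma connectivity_def (tl hd : E → V) (s t : V) :
    connectivity tl hd s t = sSup (PathSet tl hd s t) := rfl

lemma zero_mem (tl hd : E → V) (s t : V) : 0 ∈ PathSet tl hd s t :=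
  ⟨fun i => i.elim0, fun i => i.elim0, fun i _ _ => i.elim0⟩

lemma mem_of_le {tl hd : E → V} {s t : V} {r r' : ℕ} (h : r' ≤ r)
    (hr : r ∈ PathSet tl hd s t) : r' ∈ PathSet tl hd s t := by
  obtain ⟨W, h1, h2⟩ := hr
  exact ⟨fun i => W (Fin.castLE h i), fun i => h1 _,
    fun i j hij => h2 _ _ (fun hc => hij (Fin.castLE_injective h hc))⟩

lemma bddAbove [Fintype E] (tl hd : E → V) (s t : V) : BddAbove (PathSet tl hd s t) := by
  refine ⟨Fintype.card E, fun r hr => ?_⟩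
  obtain ⟨W, h1, h2⟩ := hr
  have hinj : Function.Injective (fun i : Fin r => (W i).head (h1 i).choose) := by
    intro i j hij
    by_contra hne
    apply h2 i j hne ((W i).head (h1 i).choose) (List.head_mem _)
    have heq : (W i).head (h1 i).choose = (W j).head (h1 j).choose := hij
    rw [heq]
    exact List.head_mem _
  simpa using Fintype.card_le_of_injective _ hinj

lemma trim {tl hd : E → V} {s t : V} (n : ℕ) :
    ∀ w : List E, w.length = n → IsEdgePath tl hd s t w →
      ∃ w', (∀ x ∈ w', x ∈ w) ∧ IsEdgePath tl hd s t w' ∧ s ∉ w'.map hd := by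
  induction n using Nat.strong_induction_on with
  | _ n ih =>
  rintro w rfl ⟨hne, hch, hhd, hlast, hnd, hst⟩
  by_cases hs : s ∈ w.map hd
  · obtain ⟨e, he, hes⟩ := List.mem_map.mp hs
    obtain ⟨l1, l2, hw⟩ := List.append_of_mem he
    have hw' : w = (l1 ++ [e]) ++ l2 := by simp [hw]
    have hl2 : l2 ≠ [] := by
      rintro rfl
      apply hst
      have h3 : w.getLast? = some e := by rw [hw']; simp
      rw [List.getLast?_eq_getLast hne] at h3
      rw [← hes, ← hlast, Option.some.inj h3]
    have hsuf : l2 <:+ w := ⟨l1 ++ [e], hw'.symm⟩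
    have hch2 : l2.Chain' (fun a b => hd a = tl b) := hch.suffix hsuf
    have hhd2 : tl (l2.head hl2) = s := by
      have := (List.isChain_append.mp (hw' ▸ hch)).2.2 e (by simp) (l2.head hl2)
        (List.head?_eq_head hl2)
      rw [← this, hes]
    have hlast2 : hd (l2.getLast hl2) = t := by
      have h3 : w.getLast? = some (l2.getLast hl2) := by
        rw [hw', List.getLast?_append, List.getLast?_eq_getLast hl2]; rfl
      rw [List.getLast?_eq_getLast hne] at h3
      rw [← hlast, Option.some.inj h3]
    have hnd2 : (l2.map hd).Nodup := ((hsuf.sublist).map hd).nodup hnd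
    have hlen : l2.length < w.length := by
      rw [hw']
      simp
      omega
    obtain ⟨w', hsub, hpath, hs'⟩ := ih l2.length hlen l2 rfl ⟨hl2, hch2, hhd2, hlast2, hnd2, hst⟩
    exact ⟨w', fun x hx => hsuf.subset (hsub x hx), hpath, hs'⟩
  · exact ⟨w, fun x h => h, ⟨hne, hch, hhd, hlast, hnd, hst⟩, hs⟩


def T' (tl : E → V) (k : ℕ) : E ⊕ ((V × Fin k) ⊕ (V × Fin k)) → V ⊕ (V ⊕ V) :=
  Sum.elim (fun e => Sum.inr (Sum.inr (tl e)))
    (Sum.elim (fun p : V × Fin k => Sum.inl p.1) (fun p : V × Fin k => Sum.inr (Sum.inl p.1)))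

def H' (hd : E → V) (k : ℕ) : E ⊕ ((V × Fin k) ⊕ (V × Fin k)) → V ⊕ (V ⊕ V) :=
  Sum.elim (fun e => Sum.inr (Sum.inl (hd e)))
    (Sum.elim (fun p : V × Fin k => Sum.inr (Sum.inr p.1)) (fun p : V × Fin k => Sum.inl p.1))

lemma extract_core {tl hd : E → V} {k : ℕ} (b : V) (n : ℕ) :
    ∀ (w : List (E ⊕ ((V × Fin k) ⊕ (V × Fin k)))), w.length = n → ∀ (hne : w ≠ []),
      w.Chain' (fun a b => H' hd k a = T' tl k b) → ∀ (a : V),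
      T' tl k (w.head hne) = .inl a → H' hd k (w.getLast hne) = .inl b →
      ∃ hp : w.filterMap Sum.getLeft? ≠ [],
        (w.filterMap Sum.getLeft?).Chain' (fun a b => hd a = tl b) ∧
        tl ((w.filterMap Sum.getLeft?).head hp) = a ∧
        hd ((w.filterMap Sum.getLeft?).getLast hp) = b := by
  induction n using Nat.strong_induction_on with
  | _ n ih =>
  rintro w rfl hne hch a ha hb
  match w, hne with
  | .inl e :: w1, _ => simp [T'] at ha
  | .inr (.inr p) :: w1, _ => simp [T'] at ha
  | .inr (.inl p) :: w1, hne =>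
  simp only [T', Sum.elim_inr, Sum.elim_inl, List.head_cons, Sum.inl.injEq] at ha
  match w1 with
  | [] => simp [H'] at hb
  | y :: w2 =>
  have hxy : H' hd k (.inr (.inl p)) = T' tl k y := List.isChain_cons_cons.mp hch |>.1
  match y with
  | .inr (.inl q) => simp [T', H'] at hxy
  | .inr (.inr q) => simp [T', H'] at hxy
  | .inl e =>
  have hte : tl e = p.1 := by simpa [T', H'] using hxy.symm
  match w2 with
  | [] => simp [H', List.getLast] at hb
  | z :: w3 =>
  have hyz : H' hd k (.inl e) = T' tl k z := (List.isChain_cons_cons.mp (List.isChain_cons_cons.mp hch).2).1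
  match z with
  | .inl e' => simp [T', H'] at hyz
  | .inr (.inl q) => simp [T', H'] at hyz
  | .inr (.inr q) =>
  have hq : q.1 = hd e := by simpa [T', H'] using hyz.symm
  match w3 with
  | [] =>
    have hb' : hd e = b := by
      simpa [H', List.getLast, hq] using hb
    refine ⟨by simp [Sum.getLeft?], ?_, ?_, ?_⟩
    · simp [Sum.getLeft?, List.filterMap, List.Chain']
    · simp [Sum.getLeft?, List.filterMap, hte, ha]
    · simp [Sum.getLeft?, List.filterMap, hb']
  | u :: w4 =>
    have hzu : H' hd k (.inr (.inr q)) = T' tl k u :=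
      (List.isChain_cons_cons.mp (List.isChain_cons_cons.mp (List.isChain_cons_cons.mp hch).2).2).1
    have hne3 : (u :: w4 : List (E ⊕ ((V × Fin k) ⊕ (V × Fin k)))) ≠ [] := by simp
    have hch3 : (u :: w4).Chain' (fun a b => H' hd k a = T' tl k b) :=
      (List.isChain_cons_cons.mp (List.isChain_cons_cons.mp (List.isChain_cons_cons.mp hch).2).2).2
    have hlen : (u :: w4 : List (E ⊕ ((V × Fin k) ⊕ (V × Fin k)))).length <
        (Sum.inr (Sum.inl p) :: Sum.inl e :: Sum.inr (Sum.inr q) :: u :: w4).length := by simp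
    have ha3 : T' tl k ((u :: w4).head hne3) = .inl (hd e) := by
      rw [List.head_cons, ← hzu]
      simp [H', hq]
    have hb3 : H' hd k ((u :: w4).getLast hne3) = .inl b := by
      rw [← hb]
      congr 1
    obtain ⟨hp3, hch4, hhd4, hlast4⟩ := ih _ hlen _ rfl hne3 hch3 _ ha3 hb3
    have hfmw : (Sum.inr (Sum.inl p) :: Sum.inl e :: Sum.inr (Sum.inr q) :: u :: w4).filterMap
        Sum.getLeft? = e :: (u :: w4).filterMap Sum.getLeft? := rfl
    rw [hfmw]
    refine ⟨by simp, ?_, by simp [hte, ha], ?_⟩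
    · simp only [List.Chain']; rw [List.isChain_cons]
      refine ⟨?_, hch4⟩
      intro v hv
      rw [List.head?_eq_head hp3] at hv
      rw [← Option.some.inj hv, hhd4]
    · rw [List.getLast_cons hp3]
      exact hlast4

section SubL
variable {α β : Type*}

lemma filterMap_inl_sublist : ∀ w : List (α ⊕ β),
    List.Sublist ((w.filterMap Sum.getLeft?).map Sum.inl) w
  | [] => List.Sublist.slnil
  | .inl a :: w => by
      simpa [Sum.getLeft?] using (filterMap_inl_sublist w).cons₂ (Sum.inl a)
  | .inr b :: w => by
      exact (filterMap_inl_sublist w).cons (Sum.inr b)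


end SubL

lemma pathset_new_le {tl hd : E → V} {k : ℕ} {s t : V} {r : ℕ}
    (hr : r ∈ PathSet (T' tl k) (H' hd k) (.inl s) (.inl t)) : r ∈ PathSet tl hd s t := by
  obtain ⟨W, h1, h2⟩ := hr
  refine ⟨fun i => (W i).filterMap Sum.getLeft?, fun i => ?_, fun i j hij x hxi hxj => ?_⟩
  · obtain ⟨hne, hch, hhd, hlast, hnd, hst⟩ := h1 i
    obtain ⟨hp, hch', hhd', hlast'⟩ := extract_core t _ (W i) rfl hne hch s hhd hlast
    refine ⟨hp, hch', hhd', hlast', ?_, fun h => hst (congrArg Sum.inl h)⟩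
    -- Nodup of heads
    have hsub := (filterMap_inl_sublist (W i)).map (H' hd k)
    have hnd2 : ((((W i).filterMap Sum.getLeft?).map Sum.inl).map (H' hd k)).Nodup :=
      hsub.nodup hnd
    rw [List.map_map] at hnd2
    have : (((W i).filterMap Sum.getLeft?).map (fun e => (Sum.inr (Sum.inl (hd e)) : V ⊕ (V ⊕ V)))).Nodup := hnd2
    rw [show (fun e => (Sum.inr (Sum.inl (hd e)) : V ⊕ (V ⊕ V))) =
      (fun v => (Sum.inr (Sum.inl v) : V ⊕ (V ⊕ V))) ∘ hd from rfl, ← List.map_map] at this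
    exact this.of_map _
  · have hxi' : Sum.inl x ∈ W i := by
      obtain ⟨y, hy, hxy⟩ := List.mem_filterMap.mp hxi
      cases y with
      | inl a => simp [Sum.getLeft?] at hxy; subst hxy; exact hy
      | inr b => simp [Sum.getLeft?] at hxy
    have hxj' : Sum.inl x ∈ W j := by
      obtain ⟨y, hy, hxy⟩ := List.mem_filterMap.mp hxj
      cases y with
      | inl a => simp [Sum.getLeft?] at hxy; subst hxy; exact hy
      | inr b => simp [Sum.getLeft?] at hxy
    exact h2 i j hij _ hxi' hxj'

lemma le_k {tl hd : E → V} {k : ℕ} {s t : V} {r : ℕ}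
    (hr : r ∈ PathSet (T' tl k) (H' hd k) (.inl s) (.inl t)) : r ≤ k := by
  obtain ⟨W, h1, h2⟩ := hr
  have hex : ∀ i : Fin r, ∃ c : Fin k,
      (W i).head (h1 i).choose = Sum.inr (Sum.inl (s, c)) := by
    intro i
    have hhd := (h1 i).choose_spec.2.1
    match hw : (W i).head (h1 i).choose with
    | .inl e => rw [hw] at hhd; simp [T'] at hhd
    | .inr (.inr p) => rw [hw] at hhd; simp [T'] at hhd
    | .inr (.inl p) =>
      rw [hw] at hhd
      simp only [T', Sum.elim_inr, Sum.elim_inl, Sum.inl.injEq] at hhd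
      exact ⟨p.2, by rw [← hhd]⟩
  choose c hc using hex
  have hinj : Function.Injective c := by
    intro i j hij
    by_contra hne
    apply h2 i j hne ((W i).head (h1 i).choose) (List.head_mem _)
    rw [hc i, hij, ← hc j]
    exact List.head_mem _
  simpa using Fintype.card_le_of_injective _ hinj

def blow (tl hd : E → V) (k : ℕ) (i : Fin k) (w : List E) :
    List (E ⊕ ((V × Fin k) ⊕ (V × Fin k))) :=
  w.flatMap fun e => [.inr (.inl (tl e, i)), .inl e, .inr (.inr (hd e, i))]

lemma blow_cons {tl hd : E → V} {k : ℕ} {i : Fin k} {e : E} {w : List E} :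
    blow tl hd k i (e :: w) =
      .inr (.inl (tl e, i)) :: .inl e :: .inr (.inr (hd e, i)) :: blow tl hd k i w := by
  simp [blow]

lemma blow_ne_nil {tl hd : E → V} {k : ℕ} {i : Fin k} {w : List E} (hw : w ≠ []) :
    blow tl hd k i w ≠ [] := by
  cases w with
  | nil => exact absurd rfl hw
  | cons e l => rw [blow_cons]; simp

lemma blow_getLast? {tl hd : E → V} {k : ℕ} {i : Fin k} :
    ∀ (w : List E) (hw : w ≠ []),
      (blow tl hd k i w).getLast? = some (.inr (.inr (hd (w.getLast hw), i)))
  | [e], _ => by simp [blow]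
  | e :: e' :: l, _ => by
      rw [show blow tl hd k i (e :: e' :: l) =
          [.inr (.inl (tl e, i)), .inl e, .inr (.inr (hd e, i))] ++ blow tl hd k i (e' :: l)
          from by simp [blow], List.getLast?_append,
        blow_getLast? (e' :: l) (List.cons_ne_nil e' l), List.getLast_cons (List.cons_ne_nil e' l)]
      rfl

lemma blow_chain' {tl hd : E → V} {k : ℕ} {i : Fin k} :
    ∀ {w : List E}, w.Chain' (fun a b => hd a = tl b) →
      (blow tl hd k i w).Chain' (fun a b => H' hd k a = T' tl k b)
  | [], _ => by simp [blow, List.Chain']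
  | [e], _ => by simp [blow, T', H', List.Chain']
  | e :: e' :: l, hch => by
      have hee' : hd e = tl e' := (List.isChain_cons_cons.mp hch).1
      have ih := blow_chain' (i := i) (List.isChain_cons_cons.mp hch).2
      rw [blow_cons]
      simp only [List.Chain']; rw [List.isChain_cons_cons, List.isChain_cons_cons, List.isChain_cons]
      refine ⟨by simp [T', H'], by simp [T', H'], ?_, ih⟩
      intro y hy
      rw [blow_cons] at hy
      simp only [List.head?_cons, Option.mem_def, Option.some.injEq] at hy
      subst hy
      simp [T', H', hee']

lemma map_tail_eq {tl hd : E → V} :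
    ∀ {w : List E}, w.Chain' (fun a b => hd a = tl b) → ∀ (hw : w ≠ []),
      w.map tl = tl (w.head hw) :: (w.map hd).dropLast
  | [e], _, _ => by simp
  | e :: e' :: l, hch, _ => by
      have hee' : hd e = tl e' := (List.isChain_cons_cons.mp hch).1
      have ih := map_tail_eq (List.isChain_cons_cons.mp hch).2 (List.cons_ne_nil e' l)
      simp only [List.map_cons, List.head_cons] at ih ⊢
      rw [ih, List.dropLast_cons₂, hee']

lemma blow_head? {tl hd : E → V} {k : ℕ} {i : Fin k} :
    ∀ (w : List E) (hw : w ≠ []),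
      (blow tl hd k i w).head? = some (.inr (.inl (tl (w.head hw), i)))
  | e :: l, _ => by rw [blow_cons]; simp

lemma blow_nodup_heads {tl hd : E → V} {k : ℕ} {i : Fin k} {w : List E}
    (hch : w.Chain' (fun a b => hd a = tl b)) (hw : w ≠ [])
    (hnd : (w.map hd).Nodup) (hs : tl (w.head hw) ∉ w.map hd) :
    ((blow tl hd k i w).map (H' hd k)).Nodup := by
  have hmap : (blow tl hd k i w).map (H' hd k) =
      w.flatMap (fun e => [(.inr (.inr (tl e)) : V ⊕ (V ⊕ V)), .inr (.inl (hd e)), .inl (hd e)]) := by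
    simp [blow, List.map_flatMap, H']
  rw [hmap, List.nodup_flatMap]
  have hwnd : w.Nodup := hnd.of_map hd
  have htl : (w.map tl).Nodup := by
    rw [map_tail_eq hch hw]
    exact List.nodup_cons.mpr
      ⟨fun h => hs ((List.dropLast_sublist _).subset h), (List.dropLast_sublist _).nodup hnd⟩
  refine ⟨fun e _ => by simp, hwnd.pairwise_of_forall_ne ?_⟩
  intro a ha b hb hab
  have h1 : tl a ≠ tl b := fun h => hab (List.inj_on_of_nodup_map htl ha hb h)
  have h2 : hd a ≠ hd b := fun h => hab (List.inj_on_of_nodup_map hnd ha hb h)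
  intro x hx1 hx2
  simp only [List.mem_cons, List.not_mem_nil, or_false] at hx1 hx2
  rcases hx1 with rfl | rfl | rfl <;> rcases hx2 with h | h | h <;> simp_all

lemma min_mem {tl hd : E → V} {k r : ℕ} {s t : V} (hrk : r ≤ k)
    (hr : r ∈ PathSet tl hd s t) :
    r ∈ PathSet (T' tl k) (H' hd k) (.inl s) (.inl t) := by
  obtain ⟨W0, h1, h2⟩ := hr
  have htr := fun i => trim (W0 i).length (W0 i) rfl (h1 i)
  choose W hsub hpath hs using htr
  have h2' : ∀ i j, i ≠ j → ∀ x ∈ W i, x ∉ W j := fun i j hij x hxi hxj =>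
    h2 i j hij x (hsub i x hxi) (hsub j x hxj)
  refine ⟨fun i => blow tl hd k (Fin.castLE hrk i) (W i), fun i => ?_, ?_⟩
  · obtain ⟨hne, hch, hhd, hlast, hnd, hst⟩ := hpath i
    refine ⟨blow_ne_nil hne, blow_chain' hch, ?_, ?_, ?_, by simp [hst]⟩
    · have h3 := blow_head? (i := Fin.castLE hrk i) (tl := tl) (hd := hd) (W i) hne
      rw [List.head?_eq_head (blow_ne_nil hne)] at h3
      rw [Option.some.inj h3]
      simp [T', hhd]
    · have h3 := blow_getLast? (i := Fin.castLE hrk i) (tl := tl) (hd := hd) (W i) hne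
      rw [List.getLast?_eq_getLast (blow_ne_nil hne)] at h3
      rw [Option.some.inj h3]
      simp [H', hlast]
    · exact blow_nodup_heads hch hne hnd (hhd ▸ hs i)
  · intro i j hij x hxi hxj
    simp only [blow, List.mem_flatMap] at hxi hxj
    obtain ⟨a, ha, hxa⟩ := hxi
    obtain ⟨b, hb, hxb⟩ := hxj
    have hii : Fin.castLE hrk i ≠ Fin.castLE hrk j :=
      fun h => hij (Fin.castLE_injective hrk h)
    simp only [List.mem_cons, List.mem_singleton, List.not_mem_nil, or_false] at hxa hxb
    rcases hxa with rfl | rfl | rfl <;> rcases hxb with h | h | h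
    · exact hii (congrArg Prod.snd (Sum.inl.inj (Sum.inr.inj h)))
    · exact absurd h (by simp)
    · exact absurd h (by simp)
    · exact absurd h (by simp)
    · exact h2' i j hij a ha (by rw [Sum.inl.inj h]; exact hb)
    · exact absurd h (by simp)
    · exact absurd h (by simp)
    · exact absurd h (by simp)
    · exact hii (congrArg Prod.snd (Sum.inr.inj (Sum.inr.inj h)))

end DegRedAux

/-- **Preserving Small Connectivities.** Let `G` be a finite simple directed graph on
vertex set `V` and `k ≥ 1`. Build `G_new` by replacing each vertex `v` with three
vertices `v, v_in, v_out` (encoded `inl v`, `inr (inl v)`, `inr (inr v)`), replacing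
each edge `(u,v)` by `(u_out, v_in)`, and adding `k` parallel edges from `v` to `v_out`
and `k` parallel edges from `v_in` to `v`. Then for any original vertices `s, t ∈ V`,
the maximum number of pairwise edge-disjoint `s`-`t` paths in `G_new` equals
`min k (λ(s,t))`, where `λ(s,t)` is the corresponding maximum in `G`. -/
theorem degree_reduction_preserves_small_connectivities {V E : Type*}
    [Fintype V] [Fintype E] [DecidableEq V] [DecidableEq E]
    (tail head : E → V)
    (hsimple : Function.Injective fun e => (tail e, head e))
    (hloop : ∀ e, tail e ≠ head e)
    (k : ℕ) (hk : 1 ≤ k) (s t : V) :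
    connectivity
        (Sum.elim (fun e => Sum.inr (Sum.inr (tail e)))
          (Sum.elim (fun p : V × Fin k => Sum.inl p.1)
            (fun p : V × Fin k => Sum.inr (Sum.inl p.1))))
        (Sum.elim (fun e => Sum.inr (Sum.inl (head e)))
          (Sum.elim (fun p : V × Fin k => Sum.inr (Sum.inr p.1))
            (fun p : V × Fin k => Sum.inl p.1)))
        (Sum.inl s) (Sum.inl t) =
      min k (connectivity tail head s t) := by
  open DegRedAux in
  show connectivity (T' tail k) (H' head k) (.inl s) (.inl t) = _
  rw [connectivity_def, connectivity_def]
  apply le_antisymm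
  · apply csSup_le ⟨0, zero_mem _ _ _ _⟩
    intro r hr
    exact le_min (le_k hr) (le_csSup (bddAbove _ _ _ _) (pathset_new_le hr))
  · apply le_csSup (bddAbove _ _ _ _)
    have hmem : sSup (PathSet tail head s t) ∈ PathSet tail head s t :=
      Nat.sSup_mem ⟨0, zero_mem _ _ _ _⟩ (bddAbove _ _ _ _)
    exact min_mem (min_le_left _ _) (mem_of_le (min_le_right _ _) hmem)
end
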